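/- Let a>0, s>1/2 with s−1/2 ∉ ℕ, m = ⌊s−1/2⌋, and let g ∈ L²([-a,a]). Define F(z) = (2π)^{-1/2} ∫_{-a}^{a} g(ξ) |ξ|^{-s} (e^{izξ} − P_m(izξ)) dξ. Then: (i) the integral converges absolutely for every z ∈ ℂ; (ii) F is entire of exponential type a; (iii) F^{(j)}(0) = 0 for all 0 ≤ j ≤ m; and (iv) for every z ∈ ℂ, F^{(m+1)}(z) = (2π)^{-1/2} ∫_{-a}^{a} (iξ)^{m+1} |ξ|^{-s} g(ξ) e^{izξ} dξ. (This is the inverse of the fractional Laplacian Δ^{s/2} : PW^s_a → PW_a applied to the function of PW_a with Fourier transform g.) -/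

import Mathlib

/-!
Write `expRemainder n w = exp w - ∑_{j<n} w^j/j!` for the tail of the exponential series. It
satisfies `|expRemainder n w| ≤ |w|^n e^{|w|}` and `(expRemainder (n+1))' = expRemainder n`.
So on the support `[-a, a]` of `g` the integrand defining `F` is dominated by
`|g ξ| |ξ|^(m+1-s) |z|^(m+1) e^(a|z|)`, which is integrable by Cauchy–Schwarz because
`2 (m + 1 - s) > -1`. Differentiating under the integral sign multiplies the weight by `iξ`
and lowers the order of the tail by one, so `F^(j)` is again such an integral, with
`expRemainder (m + 1 - j)`; it vanishes at `0` for `j ≤ m`, and for `j = m + 1` the tail is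
the whole exponential. The bound `|z|^(m+1) e^(a|z|)` gives exponential type `a`.
-/

open MeasureTheory Complex Filter Topology

noncomputable section

/-- `F` is an entire function of exponential type `a`. -/
def ExpType (a : ℝ) (F : ℂ → ℂ) : Prop :=
  ∀ ε > (0 : ℝ), ∃ C > (0 : ℝ), ∀ z : ℂ, ‖F z‖ ≤ C * Real.exp ((a + ε) * ‖z‖)

def expRemainder (n : ℕ) (w : ℂ) : ℂ :=
  exp w - ∑ j ∈ Finset.range n, w ^ j / j.factorial

lemma expRemainder_succ (n : ℕ) (w : ℂ) :
    expRemainder (n + 1) w = expRemainder n w - w ^ n / n.factorial := by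
  simp only [expRemainder, Finset.sum_range_succ, sub_add_eq_sub_sub]

lemma expRemainder_succ_zero (n : ℕ) : expRemainder (n + 1) 0 = 0 := by
  simp [expRemainder, Finset.sum_range_succ']

lemma norm_expRemainder_le (n : ℕ) (w : ℂ) : ‖expRemainder n w‖ ≤ ‖w‖ ^ n * Real.exp ‖w‖ :=
  Complex.norm_exp_sub_sum_le_norm_mul_exp w n

lemma continuous_expRemainder (n : ℕ) : Continuous (expRemainder n) := by
  unfold expRemainder
  fun_prop

lemma hasDerivAt_expRemainder_succ (n : ℕ) (w : ℂ) :
    HasDerivAt (expRemainder (n + 1)) (expRemainder n w) w := by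
  induction n with
  | zero =>
    have h1 : expRemainder 1 = fun x => exp x - 1 := funext fun x => by simp [expRemainder]
    rw [h1, show expRemainder 0 w = exp w by simp [expRemainder]]
    exact (Complex.hasDerivAt_exp w).sub_const 1
  | succ n ih =>
    have hpow : HasDerivAt (fun w : ℂ => w ^ (n + 1) / (n + 1).factorial)
        (w ^ n / n.factorial) w := by
      have h := (hasDerivAt_pow (n + 1) w).div_const ((n + 1).factorial : ℂ)
      refine h.congr_deriv ?_
      rw [Nat.factorial_succ]
      push_cast
      field_simp
    have h := ih.sub hpow
    rw [← expRemainder_succ] at h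
    exact h.congr_of_eventuallyEq (Eventually.of_forall (expRemainder_succ _))

lemma expType_of_norm_le_pow_mul_exp {F : ℂ → ℂ} {a C : ℝ} {n : ℕ} (hC : 0 ≤ C)
    (hF : ∀ z, ‖F z‖ ≤ C * (‖z‖ ^ n * Real.exp (a * ‖z‖))) : ExpType a F := by
  intro ε hε
  refine ⟨C * (n.factorial / ε ^ n) + 1, by positivity, fun z => ?_⟩
  have hpow : ‖z‖ ^ n ≤ n.factorial / ε ^ n * Real.exp (ε * ‖z‖) := by
    have h := Real.pow_div_factorial_le_exp (x := ε * ‖z‖) (by positivity) n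
    rw [mul_pow, div_le_iff₀ (by positivity)] at h
    rw [div_mul_eq_mul_div, le_div_iff₀ (by positivity)]
    linarith
  calc ‖F z‖ ≤ C * (‖z‖ ^ n * Real.exp (a * ‖z‖)) := hF z
    _ ≤ C * (n.factorial / ε ^ n * Real.exp (ε * ‖z‖) * Real.exp (a * ‖z‖)) := by gcongr
    _ = C * (n.factorial / ε ^ n) * Real.exp ((a + ε) * ‖z‖) := by
      rw [add_mul, Real.exp_add]
      ring
    _ ≤ (C * (n.factorial / ε ^ n) + 1) * Real.exp ((a + ε) * ‖z‖) := by gcongr; linarith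

def remainderIntegral (μ : Measure ℝ) (h : ℝ → ℂ) (n : ℕ) (z : ℂ) : ℂ :=
  ∫ ξ, h ξ * expRemainder n (I * z * ξ) ∂μ

structure HasBandlimitedMoment (μ : Measure ℝ) (a : ℝ) (n : ℕ) (h : ℝ → ℂ) : Prop where
  aestronglyMeasurable : AEStronglyMeasurable h μ
  abs_le_of_ne_zero : ∀ ξ, h ξ ≠ 0 → |ξ| ≤ a
  integrable_norm_mul_pow : Integrable (fun ξ => ‖h ξ‖ * |ξ| ^ n) μ

section RemainderIntegral

variable {μ : Measure ℝ} {h : ℝ → ℂ} {a : ℝ} {n : ℕ}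

lemma HasBandlimitedMoment.I_mul (hh : HasBandlimitedMoment μ a (n + 1) h) :
    HasBandlimitedMoment μ a n (fun ξ => I * ξ * h ξ) where
  aestronglyMeasurable := (by fun_prop : Continuous fun ξ : ℝ => I * ξ).aestronglyMeasurable.mul
    hh.aestronglyMeasurable
  abs_le_of_ne_zero ξ hξ := hh.abs_le_of_ne_zero ξ (right_ne_zero_of_mul hξ)
  integrable_norm_mul_pow := by
    refine hh.integrable_norm_mul_pow.congr (ae_of_all _ fun ξ => ?_)
    simp only [norm_mul, norm_I, norm_real, Real.norm_eq_abs, pow_succ]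
    ring

lemma norm_mul_expRemainder_le (hsupp : ∀ ξ, h ξ ≠ 0 → |ξ| ≤ a) {z : ℂ} {r : ℝ}
    (hr : ‖z‖ ≤ r) (ξ : ℝ) :
    ‖h ξ * expRemainder n (I * z * ξ)‖ ≤ ‖h ξ‖ * |ξ| ^ n * (r ^ n * Real.exp (a * r)) := by
  rcases eq_or_ne (h ξ) 0 with h0 | h0
  · simp [h0]
  have hξ := hsupp ξ h0
  have hw : ‖I * z * ξ‖ = ‖z‖ * |ξ| := by simp
  calc ‖h ξ * expRemainder n (I * z * ξ)‖
      ≤ ‖h ξ‖ * ((‖z‖ * |ξ|) ^ n * Real.exp (‖z‖ * |ξ|)) := by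
        rw [norm_mul, ← hw]
        gcongr
        exact norm_expRemainder_le n _
    _ ≤ ‖h ξ‖ * ((r * |ξ|) ^ n * Real.exp (r * a)) := by
        have hr0 : 0 ≤ r := (norm_nonneg z).trans hr
        gcongr
    _ = ‖h ξ‖ * |ξ| ^ n * (r ^ n * Real.exp (a * r)) := by rw [mul_comm r a]; ring

lemma HasBandlimitedMoment.integrable_mul_expRemainder (hh : HasBandlimitedMoment μ a n h)
    (z : ℂ) : Integrable (fun ξ => h ξ * expRemainder n (I * z * ξ)) μ :=
  (hh.integrable_norm_mul_pow.mul_const _).mono'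
    (hh.aestronglyMeasurable.mul
      ((continuous_expRemainder n).comp (by fun_prop)).aestronglyMeasurable)
    (ae_of_all _ (norm_mul_expRemainder_le hh.abs_le_of_ne_zero le_rfl))

lemma HasBandlimitedMoment.norm_remainderIntegral_le (hh : HasBandlimitedMoment μ a n h)
    (z : ℂ) :
    ‖remainderIntegral μ h n z‖ ≤
      (∫ ξ, ‖h ξ‖ * |ξ| ^ n ∂μ) * (‖z‖ ^ n * Real.exp (a * ‖z‖)) := by
  rw [← integral_mul_const]
  exact norm_integral_le_of_norm_le (hh.integrable_norm_mul_pow.mul_const _)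
    (ae_of_all _ (norm_mul_expRemainder_le hh.abs_le_of_ne_zero le_rfl))

lemma hasDerivAt_mul_expRemainder_succ (c : ℂ) (ξ : ℝ) (z : ℂ) :
    HasDerivAt (fun w => c * expRemainder (n + 1) (I * w * ξ))
      (I * ξ * c * expRemainder n (I * z * ξ)) z := by
  have hlin : HasDerivAt (fun w : ℂ => I * w * ξ) (I * ξ) z := by
    simpa using ((hasDerivAt_id z).const_mul I).mul_const (ξ : ℂ)
  exact (((hasDerivAt_expRemainder_succ n _).comp z hlin).const_mul c).congr_deriv (by ring)

lemma HasBandlimitedMoment.hasDerivAt_remainderIntegral_succ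
    (hh : HasBandlimitedMoment μ a (n + 1) h) (z₀ : ℂ) :
    HasDerivAt (remainderIntegral μ h (n + 1))
      (remainderIntegral μ (fun ξ => I * ξ * h ξ) n z₀) z₀ := by
  have hh' := hh.I_mul
  refine (hasDerivAt_integral_of_dominated_loc_of_deriv_le
    (F' := fun z ξ => I * ξ * h ξ * expRemainder n (I * z * ξ)) (Metric.ball_mem_nhds z₀ one_pos)
    (Eventually.of_forall fun z => (hh.integrable_mul_expRemainder z).aestronglyMeasurable)
    (hh.integrable_mul_expRemainder z₀) (hh'.integrable_mul_expRemainder z₀).aestronglyMeasurable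
    (ae_of_all _ fun ξ z hz => norm_mul_expRemainder_le hh'.abs_le_of_ne_zero ?_ ξ)
    (hh'.integrable_norm_mul_pow.mul_const ((‖z₀‖ + 1) ^ n * Real.exp (a * (‖z₀‖ + 1))))
    (ae_of_all _ fun ξ z _ => hasDerivAt_mul_expRemainder_succ (h ξ) ξ z)).2
  calc ‖z‖ ≤ ‖z₀‖ + ‖z - z₀‖ := norm_le_norm_add_norm_sub' z z₀
    _ ≤ ‖z₀‖ + 1 := by rw [← dist_eq_norm]; linarith [Metric.mem_ball.1 hz]

lemma HasBandlimitedMoment.iteratedDeriv_remainderIntegral (k : ℕ)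
    (hh : HasBandlimitedMoment μ a (n + k) h) :
    iteratedDeriv k (remainderIntegral μ h (n + k)) =
      remainderIntegral μ (fun ξ => (I * ξ) ^ k * h ξ) n := by
  induction k generalizing h with
  | zero => simp
  | succ k ih =>
    rw [← add_assoc] at hh ⊢
    rw [iteratedDeriv_succ', funext fun z => (hh.hasDerivAt_remainderIntegral_succ z).deriv,
      ih hh.I_mul]
    congr 1
    funext ξ
    ring

lemma remainderIntegral_succ_zero (μ : Measure ℝ) (h : ℝ → ℂ) (n : ℕ) :
    remainderIntegral μ h (n + 1) 0 = 0 := by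
  simp [remainderIntegral, expRemainder_succ_zero]

end RemainderIntegral

lemma integrableOn_abs_rpow_Icc {q : ℝ} (hq : -1 < q) (b : ℝ) :
    IntegrableOn (fun ξ : ℝ => |ξ| ^ q) (Set.Icc (-b) b) := by
  rcases lt_or_ge b 0 with hb | hb
  · rw [Set.Icc_eq_empty (by linarith)]
    exact integrableOn_empty
  have hpos : IntervalIntegrable (fun ξ : ℝ => |ξ| ^ q) volume 0 b := by
    refine (intervalIntegral.intervalIntegrable_rpow' hq).congr fun ξ hξ => ?_
    rw [Set.uIoc_of_le hb] at hξ
    simp only [abs_of_pos hξ.1]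
  have hneg : IntervalIntegrable (fun ξ : ℝ => |ξ| ^ q) volume (-b) 0 := by
    simpa using ((IntervalIntegrable.iff_comp_neg enorm_ne_top).1 hpos).symm
  exact (intervalIntegrable_iff_integrableOn_Icc_of_le (by linarith)).1 (hneg.trans hpos)

lemma memLp_two_indicator_abs_rpow {q : ℝ} (hq : -1 / 2 < q) (b : ℝ) :
    MemLp ((Set.Icc (-b) b).indicator fun ξ : ℝ => |ξ| ^ q) 2 := by
  rw [memLp_indicator_iff_restrict measurableSet_Icc,
    memLp_two_iff_integrable_sq_norm (measurable_abs.pow_const q).aestronglyMeasurable]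
  refine (integrableOn_abs_rpow_Icc (q := q * 2) (by linarith) b).congr_fun (fun ξ _ => ?_)
    measurableSet_Icc
  rw [Real.norm_of_nonneg (by positivity), ← Real.rpow_mul_natCast (abs_nonneg ξ)]
  norm_num

lemma integrable_norm_mul_abs_rpow_mul_pow {g : ℝ → ℂ} {a s : ℝ} {n : ℕ} (hgm : Measurable g)
    (hgsupp : ∀ ξ : ℝ, ξ ∉ Set.Icc (-a) a → g ξ = 0) (hgL2 : Integrable fun ξ => ‖g ξ‖ ^ 2)
    (hn : s - 1 / 2 < n) :
    Integrable fun ξ : ℝ => ‖g ξ * ((|ξ| ^ (-s) : ℝ) : ℂ)‖ * |ξ| ^ n := by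
  have hg : MemLp (fun ξ => ‖g ξ‖) 2 :=
    ((memLp_two_iff_integrable_sq_norm hgm.aestronglyMeasurable).2 hgL2).norm
  refine (hg.integrable_mul (memLp_two_indicator_abs_rpow (q := n - s) (by linarith) a)).mono'
    (by fun_prop) (ae_of_all _ fun ξ => ?_)
  by_cases hξ : ξ ∈ Set.Icc (-a) a
  · simp only [Pi.mul_apply, Set.indicator_of_mem hξ, norm_mul, norm_real, norm_pow, abs_norm,
      Real.norm_eq_abs, abs_abs, Real.norm_of_nonneg (Real.rpow_nonneg (abs_nonneg ξ) _),
      mul_assoc, sub_eq_neg_add]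
    gcongr
    rw [← Real.rpow_natCast]
    exact Real.le_rpow_add (abs_nonneg ξ) _ _
  · simp [hgsupp ξ hξ]

theorem stmt17_general (a s : ℝ) (m : ℕ) (hm : m = Nat.floor (s - 1 / 2))
    (g : ℝ → ℂ) (hgm : Measurable g)
    (hgsupp : ∀ ξ : ℝ, ξ ∉ Set.Icc (-a) a → g ξ = 0)
    (hgL2 : Integrable (fun ξ : ℝ => ‖g ξ‖ ^ 2))
    (F : ℂ → ℂ)
    (hF : ∀ z : ℂ, F z =
      (((2 * Real.pi) ^ (-(1 / 2) : ℝ) : ℝ) : ℂ) *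
        ∫ ξ : ℝ, g ξ * ((|ξ| ^ (-s) : ℝ) : ℂ) * (Complex.exp (Complex.I * z * ξ) -
          ∑ j ∈ Finset.range (m + 1), (Complex.I * z * ξ) ^ j / (j.factorial : ℂ))) :
    (∀ z : ℂ, Integrable (fun ξ : ℝ =>
      g ξ * ((|ξ| ^ (-s) : ℝ) : ℂ) * (Complex.exp (Complex.I * z * ξ) -
        ∑ j ∈ Finset.range (m + 1), (Complex.I * z * ξ) ^ j / (j.factorial : ℂ)))) ∧
    Differentiable ℂ F ∧ ExpType a F ∧
    (∀ j : ℕ, j ≤ m → iteratedDeriv j F 0 = 0) ∧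
    (∀ z : ℂ, iteratedDeriv (m + 1) F z =
      (((2 * Real.pi) ^ (-(1 / 2) : ℝ) : ℝ) : ℂ) *
        ∫ ξ : ℝ, (Complex.I * ξ) ^ (m + 1) * ((|ξ| ^ (-s) : ℝ) : ℂ) * g ξ *
          Complex.exp (Complex.I * z * ξ)) := by
  set c : ℂ := (((2 * Real.pi) ^ (-(1 / 2) : ℝ) : ℝ) : ℂ)
  set h : ℝ → ℂ := fun ξ => g ξ * ((|ξ| ^ (-s) : ℝ) : ℂ)
  have hF' : F = fun z => c * remainderIntegral volume h (m + 1) z := funext hF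
  have hm' : s - 1 / 2 < (m + 1 : ℕ) := by
    rw [hm]
    exact_mod_cast Nat.lt_floor_add_one (s - 1 / 2)
  have hh : HasBandlimitedMoment volume a (m + 1) h :=
    ⟨(hgm.mul (measurable_ofReal.comp (measurable_abs.pow_const _))).aestronglyMeasurable,
      fun ξ hξ => abs_le.2 (not_not.1 (mt (hgsupp ξ) (left_ne_zero_of_mul hξ))),
      integrable_norm_mul_abs_rpow_mul_pow hgm hgsupp hgL2 hm'⟩
  refine ⟨hh.integrable_mul_expRemainder, ?_, ?_, fun j hj => ?_, fun z => ?_⟩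
  · rw [hF']
    exact fun z => ((hh.hasDerivAt_remainderIntegral_succ z).const_mul c).differentiableAt
  · refine expType_of_norm_le_pow_mul_exp (n := m + 1) (C := ‖c‖ * ∫ ξ, ‖h ξ‖ * |ξ| ^ (m + 1))
      (by positivity) fun z => ?_
    rw [hF', norm_mul, mul_assoc]
    exact mul_le_mul_of_nonneg_left (hh.norm_remainderIntegral_le z) (norm_nonneg c)
  · obtain ⟨n, hn⟩ : ∃ n, m + 1 = n + 1 + j := ⟨m - j, by omega⟩
    rw [hn] at hh
    rw [hF', iteratedDeriv_const_mul_field, hn, hh.iteratedDeriv_remainderIntegral j,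
      remainderIntegral_succ_zero, mul_zero]
  · have hiter := (show HasBandlimitedMoment volume a (0 + (m + 1)) h by
      rwa [zero_add]).iteratedDeriv_remainderIntegral (m + 1)
    rw [zero_add] at hiter
    rw [hF', iteratedDeriv_const_mul_field, hiter]
    simp only [remainderIntegral, expRemainder, Finset.range_zero, Finset.sum_empty, sub_zero, h]
    congr 2 with ξ
    ring

theorem stmt17 (a s : ℝ) (m : ℕ) (ha : 0 < a) (hs : 1 / 2 < s)
    (hsnotnat : ∀ n : ℕ, s - 1 / 2 ≠ n) (hm : m = Nat.floor (s - 1 / 2))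
    (g : ℝ → ℂ) (hgm : Measurable g)
    (hgsupp : ∀ ξ : ℝ, ξ ∉ Set.Icc (-a) a → g ξ = 0)
    (hgL2 : Integrable (fun ξ : ℝ => ‖g ξ‖ ^ 2))
    (F : ℂ → ℂ)
    (hF : ∀ z : ℂ, F z =
      (((2 * Real.pi) ^ (-(1 / 2) : ℝ) : ℝ) : ℂ) *
        ∫ ξ : ℝ, g ξ * ((|ξ| ^ (-s) : ℝ) : ℂ) * (Complex.exp (Complex.I * z * ξ) -
          ∑ j ∈ Finset.range (m + 1), (Complex.I * z * ξ) ^ j / (j.factorial : ℂ))) :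
    (∀ z : ℂ, Integrable (fun ξ : ℝ =>
      g ξ * ((|ξ| ^ (-s) : ℝ) : ℂ) * (Complex.exp (Complex.I * z * ξ) -
        ∑ j ∈ Finset.range (m + 1), (Complex.I * z * ξ) ^ j / (j.factorial : ℂ)))) ∧
    Differentiable ℂ F ∧ ExpType a F ∧
    (∀ j : ℕ, j ≤ m → iteratedDeriv j F 0 = 0) ∧
    (∀ z : ℂ, iteratedDeriv (m + 1) F z =
      (((2 * Real.pi) ^ (-(1 / 2) : ℝ) : ℝ) : ℂ) *
        ∫ ξ : ℝ, (Complex.I * ξ) ^ (m + 1) * ((|ξ| ^ (-s) : ℝ) : ℂ) * g ξ *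
          Complex.exp (Complex.I * z * ξ)) :=
  stmt17_general a s m hm g hgm hgsupp hgL2 F hF
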